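/- In the algebra of differential functions in one variable u (localized at u' and D(u')), the 2×2-style factorization holds: the rational pseudodifferential operator H = u'∂^{-1}∘u' + a·∂^{-1}∘u'∂^{-1}∘u'∂^{-1} equals A∘B^{-1}, where A = (∂² − 2(u''/u')∂ + (u''/u')' + a) ∘ (1/D(u')) ∘ ∂ − u', B = ∂∘(1/u')∘∂∘(1/u')∘∂∘(1/D(u'))∘∂, and D(u') = ((1/u')(u''/u')')'. In particular, for a = 0 this reduces to the operator identity u'∂^{-1}∘u' = ( (∂² − 2(u''/u')∂ + (u''/u')')∘(1/D(u'))∘∂ − u' ) ∘ B^{-1}. -/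

import Mathlib

/-!
Operators whose coefficients vanish above some order form a ring under `pdoMul`; associativity
comes down to Vandermonde's identity for the binomial coefficients `C(n, j)`, `n ∈ ℤ`. In this
ring `∂` and every multiplication by a nonzero function are units, so `B` is invertible, and
`H ∘ B = A` follows from the commutation rule `f ∘ ∂ = ∂ ∘ f - f'`, in the form
`u' ∘ ∂ ∘ (1/u') = ∂ - u''/u'` and `(u''/u')' ∘ (1/u') ∘ ∂ = ∂ ∘ (u''/u')'/u' - D(u')`.
-/

noncomputable section

/-- The integer binomial coefficient `C(p, k)` for `p ∈ ℤ`, `k ∈ ℕ`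
(the integer division is exact). -/
def zchoose (p : ℤ) (k : ℕ) : ℤ :=
  (∏ i ∈ Finset.range k, (p - (i : ℤ))) / (k.factorial : ℤ)

variable {K : Type*} [Field K]

/-- Multiplication of pseudodifferential operators over a differential field `(K, d)`,
an operator `Σ_n a_n ∂^n` being presented by its coefficient function `n ↦ a_n`. -/
def pdoMul (d : K → K) (A B : ℤ → K) (r : ℤ) : K :=
  ∑ᶠ n : ℤ, ∑ᶠ j : ℕ, (zchoose n j) • (A n * d^[j] (B (r - n + j)))

/-- The pseudodifferential operator `a ∂^n`. -/
def pdoSingle (n : ℤ) (a : K) : ℤ → K := fun m => if m = n then a else 0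

open Finset Function

theorem zchoose_eq_choose (p : ℤ) (k : ℕ) : zchoose p k = Ring.choose p k := by
  have h := Ring.descPochhammer_eq_factorial_smul_choose p k
  rw [← Polynomial.eval_eq_smeval, descPochhammer_eval_eq_prod_range, nsmul_eq_mul] at h
  rw [zchoose, h]
  exact Int.mul_ediv_cancel_left _ (by exact_mod_cast Nat.factorial_ne_zero k)

/-- Vandermonde's identity for `C(n - j + p, i)`, combined with
`C(n, j) C(n - j, t) = C(j + t, j) C(n, j + t)`. -/
theorem choose_mul_choose_sub_add (n p : ℤ) (j i : ℕ) :
    Ring.choose n j * Ring.choose (n - j + p) i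
      = ∑ tq ∈ antidiagonal i,
          Ring.choose n (j + tq.1) * (j + tq.1).choose j * Ring.choose p tq.2 := by
  rw [Ring.add_choose_eq i (Commute.all _ _), mul_sum]
  refine sum_congr rfl fun tq _ => ?_
  have h := Ring.choose_smul_choose n (Nat.le_add_right j tq.1)
  rw [Nat.add_sub_cancel_left, nsmul_eq_mul] at h
  rw [← mul_assoc, ← h]
  ring

namespace Derivation

variable {R A : Type*} [CommSemiring R]

section CommSemiring

variable [CommSemiring A] [Algebra R A] (D : Derivation R A A)

theorem iterate_leibniz (n : ℕ) (a b : A) :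
    (⇑D)^[n] (a * b) = ∑ ij ∈ antidiagonal n, n.choose ij.1 • ((⇑D)^[ij.1] a * (⇑D)^[ij.2] b) := by
  induction n with
  | zero => simp
  | succ n ih =>
    rw [sum_antidiagonal_choose_succ_nsmul (fun i j => (⇑D)^[i] a * (⇑D)^[j] b) n]
    simp only [iterate_succ_apply', ih, map_sum, map_nsmul, leibniz, smul_eq_mul, smul_add,
      sum_add_distrib]
    congr 1
    refine sum_congr rfl fun ⟨i, j⟩ hij => ?_
    rw [n.choose_symm_of_eq_add (mem_antidiagonal.1 hij).symm, mul_comm]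

theorem iterate_eq_coe_pow (n : ℕ) : (⇑D)^[n] = ⇑((D : A →ₗ[R] A) ^ n) :=
  (Module.End.coe_pow _ n).symm

theorem iterate_map_sum {ι : Type*} (n : ℕ) (s : Finset ι) (f : ι → A) :
    (⇑D)^[n] (∑ i ∈ s, f i) = ∑ i ∈ s, (⇑D)^[n] (f i) := by
  rw [iterate_eq_coe_pow, map_sum]

end CommSemiring

theorem iterate_map_zsmul [CommRing A] [Algebra R A] (D : Derivation R A A) (n : ℕ) (c : ℤ)
    (a : A) : (⇑D)^[n] (c • a) = c • (⇑D)^[n] a := by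
  rw [iterate_eq_coe_pow, map_zsmul]

end Derivation

section FiniteSums

variable {α β M : Type*} [AddCommMonoid M]

theorem finsum_finsum_eq_sum_sum {f : α → β → M} {s : Finset α} {t : Finset β}
    (h : ∀ a b, f a b ≠ 0 → a ∈ s ∧ b ∈ t) :
    ∑ᶠ a, ∑ᶠ b, f a b = ∑ a ∈ s, ∑ b ∈ t, f a b := by
  have inner : ∀ a, ∑ᶠ b, f a b = ∑ b ∈ t, f a b := fun a =>
    finsum_eq_sum_of_support_subset _ fun b hb => (h a b hb).2
  rw [finsum_congr inner]
  refine finsum_eq_sum_of_support_subset _ fun a ha => ?_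
  obtain ⟨b, -, hb⟩ := exists_ne_zero_of_sum_ne_zero ha
  exact (h a b hb).1

theorem sum_comp_add_left_of_support_subset {f : ℤ → M} {s t : Finset ℤ} (c : ℤ)
    (hs : support f ⊆ s) (ht : support (fun p => f (c + p)) ⊆ t) :
    ∑ m ∈ s, f m = ∑ p ∈ t, f (c + p) := by
  rw [← finsum_eq_sum_of_support_subset f hs, ← finsum_eq_sum_of_support_subset _ ht]
  exact (finsum_comp_equiv (Equiv.addLeft c)).symm

theorem sum_range_sum_antidiagonal {f : ℕ → ℕ → M} {J : ℕ}
    (hf : ∀ a b, J ≤ a + b → f a b = 0) :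
    ∑ k ∈ range J, ∑ ab ∈ antidiagonal k, f ab.1 ab.2
      = ∑ a ∈ range J, ∑ b ∈ range J, f a b := by
  simp only [Nat.sum_antidiagonal_eq_sum_range_succ f, sum_range_diag_flip]
  refine sum_congr rfl fun a _ => sum_subset (range_subset_range.2 (Nat.sub_le _ _)) ?_
  intro b _ hb
  exact hf a b (by simp only [mem_range] at hb; omega)

end FiniteSums

section PdoMul

variable (D : Derivation ℤ K K)

theorem le_of_iterate_apply_ne_zero {B : ℤ → K} {N x : ℤ} {j : ℕ}
    (hB : support B ⊆ Set.Iic N) (h : (⇑D)^[j] (B x) ≠ 0) : x ≤ N :=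
  hB fun hx => h (by rw [hx, iterate_map_zero])

theorem pdoMul_eq_sum {A B : ℤ → K} {NA NB : ℤ}
    (hA : support A ⊆ Set.Iic NA) (hB : support B ⊆ Set.Iic NB) {r : ℤ} {I : Finset ℤ} {J : ℕ}
    (hI : Icc (r - NB) NA ⊆ I) (hJ : NA + NB - r < J) :
    pdoMul D A B r = ∑ n ∈ I, ∑ j ∈ range J, zchoose n j • (A n * (⇑D)^[j] (B (r - n + j))) := by
  refine finsum_finsum_eq_sum_sum fun n j h => ?_
  have h' := right_ne_zero_of_smul h
  have hn : n ≤ NA := hA (left_ne_zero_of_mul h')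
  have hj : r - n + j ≤ NB := le_of_iterate_apply_ne_zero D hB (right_ne_zero_of_mul h')
  exact ⟨hI (mem_Icc.2 ⟨by omega, hn⟩), mem_range.2 (by omega)⟩

theorem support_pdoMul_subset {A B : ℤ → K} {NA NB : ℤ}
    (hA : support A ⊆ Set.Iic NA) (hB : support B ⊆ Set.Iic NB) :
    support (pdoMul D A B) ⊆ Set.Iic (NA + NB) := by
  intro r hr
  by_contra h
  rw [Set.mem_Iic, not_le] at h
  refine hr ?_
  rw [pdoMul_eq_sum D hA hB (I := ∅) (J := 0) (fun n hn => by rw [mem_Icc] at hn; omega)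
    (by omega), sum_empty]

theorem pdoMul_add_left {A A' B : ℤ → K} {NA NB : ℤ} (hA : support A ⊆ Set.Iic NA)
    (hA' : support A' ⊆ Set.Iic NA) (hB : support B ⊆ Set.Iic NB) :
    pdoMul D (A + A') B = pdoMul D A B + pdoMul D A' B := by
  funext r
  have hAA' : support (A + A') ⊆ Set.Iic NA := (support_add A A').trans (Set.union_subset hA hA')
  have hJ : NA + NB - r < (NA + NB - r).toNat + 1 := by omega
  rw [Pi.add_apply, pdoMul_eq_sum D hAA' hB subset_rfl hJ, pdoMul_eq_sum D hA hB subset_rfl hJ,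
    pdoMul_eq_sum D hA' hB subset_rfl hJ, ← sum_add_distrib]
  refine sum_congr rfl fun n _ => ?_
  rw [← sum_add_distrib]
  simp only [Pi.add_apply, add_mul, smul_add]

theorem pdoMul_add_right {A B B' : ℤ → K} {NA NB : ℤ} (hA : support A ⊆ Set.Iic NA)
    (hB : support B ⊆ Set.Iic NB) (hB' : support B' ⊆ Set.Iic NB) :
    pdoMul D A (B + B') = pdoMul D A B + pdoMul D A B' := by
  funext r
  have hBB' : support (B + B') ⊆ Set.Iic NB := (support_add B B').trans (Set.union_subset hB hB')
  have hJ : NA + NB - r < (NA + NB - r).toNat + 1 := by omega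
  rw [Pi.add_apply, pdoMul_eq_sum D hA hBB' subset_rfl hJ, pdoMul_eq_sum D hA hB subset_rfl hJ,
    pdoMul_eq_sum D hA hB' subset_rfl hJ, ← sum_add_distrib]
  refine sum_congr rfl fun n _ => ?_
  rw [← sum_add_distrib]
  simp only [Pi.add_apply, iterate_map_add, mul_add, smul_add]

theorem pdoMul_zero_left (B : ℤ → K) : pdoMul D 0 B = 0 := by
  funext r
  simp [pdoMul]

theorem pdoMul_zero_right (A : ℤ → K) : pdoMul D A 0 = 0 := by
  funext r
  simp [pdoMul, iterate_map_zero]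

theorem pdoMul_pdoSingle_left (n : ℤ) (a : K) (B : ℤ → K) (r : ℤ) :
    pdoMul D (pdoSingle n a) B r = ∑ᶠ j : ℕ, zchoose n j • (a * (⇑D)^[j] (B (r - n + j))) := by
  rw [pdoMul, finsum_eq_single _ n fun m hm => by simp [pdoSingle, hm]]
  simp [pdoSingle]

theorem pdoMul_pdoSingle_zero_left (a : K) (B : ℤ → K) : pdoMul D (pdoSingle 0 a) B = a • B := by
  funext r
  rw [pdoMul_pdoSingle_left, finsum_eq_single _ 0]
  · simp [zchoose_eq_choose]
  · intro j hj
    obtain ⟨k, rfl⟩ := Nat.exists_eq_succ_of_ne_zero hj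
    rw [zchoose_eq_choose, Ring.choose_zero_succ, zero_smul]

theorem pdoMul_pdoSingle_one_left (B : ℤ → K) (r : ℤ) :
    pdoMul D (pdoSingle 1 1) B r = B (r - 1) + D (B r) := by
  have hchoose : ∀ j, zchoose 1 j = Nat.choose 1 j := fun j => by
    rw [zchoose_eq_choose, ← Nat.cast_one, Ring.choose_natCast]
  rw [pdoMul_pdoSingle_left, finsum_eq_sum_of_support_subset (s := range 2)]
  · simp [sum_range_succ, hchoose]
  · intro j hj
    by_contra h
    simp only [mem_coe, mem_range, not_lt] at h
    simp [hchoose, Nat.choose_eq_zero_of_lt (by omega : 1 < j)] at hj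

theorem pdoMul_pdoSingle_right {c : K} (hc : D c = 0) (A : ℤ → K) (m r : ℤ) :
    pdoMul D A (pdoSingle m c) r = A (r - m) * c := by
  have hiter : ∀ (j : ℕ) (x : ℤ), j ≠ 0 → (⇑D)^[j] (pdoSingle m c x) = 0 := by
    intro j x hj
    obtain ⟨k, rfl⟩ := Nat.exists_eq_succ_of_ne_zero hj
    by_cases hx : x = m <;> simp [pdoSingle, hx, hc, iterate_map_zero]
  rw [pdoMul, finsum_eq_single _ (r - m)]
  · rw [finsum_eq_single _ 0 fun j hj => by rw [hiter j _ hj, mul_zero, smul_zero]]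
    simp [pdoSingle, zchoose_eq_choose]
  · intro n hn
    refine finsum_eq_zero_of_forall_eq_zero fun j => ?_
    rcases eq_or_ne j 0 with rfl | hj
    · simp [pdoSingle, show r - n ≠ m by omega]
    · rw [hiter j _ hj, mul_zero, smul_zero]

end PdoMul

section Assoc

variable (D : Derivation ℤ K K) (A B C : ℤ → K) (r : ℤ)

/-- A term of the expansion of `((A B) C)_r` and of `(A (B C))_r`: `n` and `p` are the orders of the
coefficients of `A` and `B`; `s` derivatives fall on `B` and `u + q` on `C`. -/
def assocSummand (n p : ℤ) (s u q : ℕ) : K :=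
  (zchoose n (s + u) * (s + u).choose s * zchoose p q) •
    (A n * (⇑D)^[s] (B p) * (⇑D)^[u + q] (C (r - n + ((s + u : ℕ) : ℤ) - p + q)))

/-- A term of the expansion of `((A B) C)_r`: `m` and `n` are the orders of the coefficients of
`A B` and `A`. -/
def leftSummand (m : ℤ) (i : ℕ) (n : ℤ) (j : ℕ) : K :=
  (zchoose m i * zchoose n j) • (A n * (⇑D)^[j] (B (m - n + j)) * (⇑D)^[i] (C (r - m + i)))

theorem leftSummand_eq_sum_assocSummand (n p : ℤ) (j i : ℕ) :
    leftSummand D A B C r (n - j + p) i n j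
      = ∑ tq ∈ antidiagonal i, assocSummand D A B C r n p j tq.1 tq.2 := by
  simp only [leftSummand, zchoose_eq_choose]
  rw [mul_comm, choose_mul_choose_sub_add, sum_smul]
  refine sum_congr rfl fun ⟨t, q⟩ htq => ?_
  rw [HasAntidiagonal.mem_antidiagonal] at htq
  subst htq
  have hB_idx : n - j + p - n + j = p := by ring
  have hC_idx : r - (n - j + p) + ((t + q : ℕ) : ℤ) = r - n + ((j + t : ℕ) : ℤ) - p + q := by
    push_cast; ring
  rw [assocSummand, hB_idx, hC_idx, zchoose_eq_choose, zchoose_eq_choose]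

variable {D A B C r} {NA NB NC : ℤ} (hA : support A ⊆ Set.Iic NA) (hB : support B ⊆ Set.Iic NB)
  (hC : support C ⊆ Set.Iic NC)
include hA hB hC

theorem leftSummand_ne_zero {m n : ℤ} {i j : ℕ} (h : leftSummand D A B C r m i n j ≠ 0) :
    n ≤ NA ∧ m - n + j ≤ NB ∧ r - m + i ≤ NC := by
  have h' := right_ne_zero_of_smul h
  exact ⟨hA (left_ne_zero_of_mul (left_ne_zero_of_mul h')),
    le_of_iterate_apply_ne_zero D hB (right_ne_zero_of_mul (left_ne_zero_of_mul h')),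
    le_of_iterate_apply_ne_zero D hC (right_ne_zero_of_mul h')⟩

variable {J : ℕ} (hJ : NA + NB + NC - r < J)
include hJ

theorem assocSummand_eq_zero {n p : ℤ} {s u q : ℕ} (h : J ≤ s + u + q) :
    assocSummand D A B C r n p s u q = 0 := by
  by_contra hne
  have h' := right_ne_zero_of_smul hne
  have hn : n ≤ NA := hA (left_ne_zero_of_mul (left_ne_zero_of_mul h'))
  have hp : p ≤ NB :=
    le_of_iterate_apply_ne_zero D hB (right_ne_zero_of_mul (left_ne_zero_of_mul h'))
  have hq := le_of_iterate_apply_ne_zero D hC (right_ne_zero_of_mul h')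
  push_cast at hq
  omega

theorem pdoMul_pdoMul_right_eq_sum :
    pdoMul D A (pdoMul D B C) r
      = ∑ n ∈ Icc (r - NB - NC) NA, ∑ p ∈ Icc (r - NA - NC) NB,
          ∑ q ∈ range J, ∑ s ∈ range J, ∑ u ∈ range J, assocSummand D A B C r n p s u q := by
  rw [pdoMul_eq_sum D hA (support_pdoMul_subset D hB hC) (I := Icc (r - NB - NC) NA) (J := J)
    (Icc_subset_Icc (by omega) le_rfl) (by omega)]
  refine sum_congr rfl fun n hn => ?_
  rw [mem_Icc] at hn
  calc ∑ k ∈ range J, zchoose n k • (A n * (⇑D)^[k] (pdoMul D B C (r - n + k)))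
      = ∑ k ∈ range J, ∑ p ∈ Icc (r - NA - NC) NB, ∑ q ∈ range J,
          ∑ su ∈ antidiagonal k, assocSummand D A B C r n p su.1 su.2 q := by
        refine sum_congr rfl fun k _ => ?_
        rw [pdoMul_eq_sum D hB hC (I := Icc (r - NA - NC) NB) (J := J)
          (Icc_subset_Icc (by omega) le_rfl) (by omega)]
        simp only [Derivation.iterate_map_sum, Derivation.iterate_map_zsmul,
          Derivation.iterate_leibniz, mul_sum, smul_sum]
        refine sum_congr rfl fun p _ => sum_congr rfl fun q _ => sum_congr rfl fun su hsu => ?_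
        obtain ⟨s, u⟩ := su
        rw [HasAntidiagonal.mem_antidiagonal] at hsu
        subst hsu
        rw [assocSummand, ← iterate_add_apply]
        simp only [zsmul_eq_mul, nsmul_eq_mul]
        push_cast
        ring
    _ = ∑ p ∈ Icc (r - NA - NC) NB, ∑ q ∈ range J, ∑ k ∈ range J,
          ∑ su ∈ antidiagonal k, assocSummand D A B C r n p su.1 su.2 q := by
        rw [sum_comm]
        exact sum_congr rfl fun p _ => sum_comm
    _ = _ := sum_congr rfl fun p _ => sum_congr rfl fun q _ =>
        sum_range_sum_antidiagonal (f := fun s u => assocSummand D A B C r n p s u q)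
          fun s u h => assocSummand_eq_zero hA hB hC hJ (by omega)

theorem pdoMul_pdoMul_left_eq_sum :
    pdoMul D (pdoMul D A B) C r
      = ∑ n ∈ Icc (r - NB - NC) NA, ∑ p ∈ Icc (r - NA - NC) NB,
          ∑ q ∈ range J, ∑ s ∈ range J, ∑ u ∈ range J, assocSummand D A B C r n p s u q := by
  set IA := Icc (r - NB - NC) NA
  set IB := Icc (r - NA - NC) NB
  set IM := Icc (r - NC) (NA + NB)
  rw [pdoMul_eq_sum D (support_pdoMul_subset D hA hB) hC (I := IM) (J := J) subset_rfl (by omega)]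
  calc ∑ m ∈ IM, ∑ i ∈ range J, zchoose m i • (pdoMul D A B m * (⇑D)^[i] (C (r - m + i)))
      = ∑ m ∈ IM, ∑ i ∈ range J, ∑ n ∈ IA, ∑ j ∈ range J, leftSummand D A B C r m i n j := by
        refine sum_congr rfl fun m hm => sum_congr rfl fun i _ => ?_
        rw [mem_Icc] at hm
        rw [pdoMul_eq_sum D hA hB (I := IA) (J := J) (Icc_subset_Icc (by omega) le_rfl)
          (by omega)]
        simp only [leftSummand, sum_mul, smul_sum, smul_mul_assoc, smul_smul]
    _ = ∑ n ∈ IA, ∑ i ∈ range J, ∑ j ∈ range J, ∑ m ∈ IM, leftSummand D A B C r m i n j := by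
        simp only [sum_comm (s := range J) (t := IA), sum_comm (s := IM) (t := IA),
          sum_comm (s := IM) (t := range J)]
    _ = ∑ n ∈ IA, ∑ i ∈ range J, ∑ j ∈ range J, ∑ p ∈ IB,
          leftSummand D A B C r (n - j + p) i n j := by
        -- `p = m - n + j` is the order of the coefficient of `B`
        refine sum_congr rfl fun n _ => sum_congr rfl fun i _ => sum_congr rfl fun j _ => ?_
        refine sum_comp_add_left_of_support_subset _ (fun m hm => ?_) (fun p hp => ?_)
        · obtain ⟨h1, h2, h3⟩ := leftSummand_ne_zero hA hB hC hm
          exact mem_Icc.2 ⟨by omega, by omega⟩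
        · obtain ⟨h1, h2, h3⟩ := leftSummand_ne_zero hA hB hC hp
          exact mem_Icc.2 ⟨by omega, by omega⟩
    _ = ∑ n ∈ IA, ∑ p ∈ IB, ∑ j ∈ range J, ∑ i ∈ range J,
          ∑ tq ∈ antidiagonal i, assocSummand D A B C r n p j tq.1 tq.2 := by
        simp only [sum_comm (s := range J) (t := IB), leftSummand_eq_sum_assocSummand]
        exact sum_congr rfl fun n _ => sum_congr rfl fun p _ => sum_comm
    _ = ∑ n ∈ IA, ∑ p ∈ IB, ∑ j ∈ range J, ∑ t ∈ range J, ∑ q ∈ range J,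
          assocSummand D A B C r n p j t q :=
        sum_congr rfl fun n _ => sum_congr rfl fun p _ => sum_congr rfl fun j _ =>
          sum_range_sum_antidiagonal (f := fun t q => assocSummand D A B C r n p j t q)
            fun t q h => assocSummand_eq_zero hA hB hC hJ (by omega)
    _ = _ := sum_congr rfl fun n _ => sum_congr rfl fun p _ =>
        (sum_congr rfl fun s _ => sum_comm).trans sum_comm

end Assoc

theorem pdoMul_assoc (D : Derivation ℤ K K) {A B C : ℤ → K} {NA NB NC : ℤ}
    (hA : support A ⊆ Set.Iic NA) (hB : support B ⊆ Set.Iic NB) (hC : support C ⊆ Set.Iic NC) :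
    pdoMul D (pdoMul D A B) C = pdoMul D A (pdoMul D B C) := by
  funext r
  have hJ : NA + NB + NC - r < (NA + NB + NC - r).toNat + 1 := by omega
  rw [pdoMul_pdoMul_left_eq_sum hA hB hC hJ, pdoMul_pdoMul_right_eq_sum hA hB hC hJ]

theorem pdoSingle_eq_single (n : ℤ) (a : K) : pdoSingle n a = Pi.single n a := by
  funext m
  simp [pdoSingle, Pi.single_apply]

theorem support_pdoSingle_subset (n : ℤ) (a : K) : support (pdoSingle n a) ⊆ Set.Iic n := by
  rw [pdoSingle_eq_single]
  exact (Pi.support_single_subset).trans (Set.singleton_subset_iff.2 Set.self_mem_Iic)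

variable (K) in
def boundedAboveSupport : AddSubgroup (ℤ → K) where
  carrier := {A | BddAbove (support A)}
  add_mem' hA hB := (hA.union hB).mono (support_add _ _)
  zero_mem' := by simp
  neg_mem' {A} hA := by rwa [Set.mem_ofPred, support_neg]

/-- Pseudodifferential operators over `(K, D)`; the otherwise unused parameter `D` selects the
multiplication `pdoMul D` of the ring structure below. -/
def PDO (_D : Derivation ℤ K K) : Type _ := boundedAboveSupport K

namespace PDO

variable {D : Derivation ℤ K K}

instance : AddCommGroup (PDO D) := inferInstanceAs (AddCommGroup (boundedAboveSupport K))

theorem exists_support_subset_Iic (X Y : PDO D) :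
    ∃ N, support X.1 ⊆ Set.Iic N ∧ support Y.1 ⊆ Set.Iic N := by
  obtain ⟨NX, hX⟩ := bddAbove_iff_subset_Iic.1 X.2
  obtain ⟨NY, hY⟩ := bddAbove_iff_subset_Iic.1 Y.2
  exact ⟨max NX NY, hX.trans (Set.Iic_subset_Iic.2 (le_max_left _ _)),
    hY.trans (Set.Iic_subset_Iic.2 (le_max_right _ _))⟩

theorem bddAbove_support_pdoMul (X Y : PDO D) : BddAbove (support (pdoMul D X.1 Y.1)) := by
  obtain ⟨N, hX, hY⟩ := exists_support_subset_Iic X Y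
  exact bddAbove_iff_subset_Iic.2 ⟨N + N, support_pdoMul_subset D hX hY⟩

theorem bddAbove_support_pdoSingle (n : ℤ) (a : K) : BddAbove (support (pdoSingle n a)) :=
  bddAbove_iff_subset_Iic.2 ⟨n, support_pdoSingle_subset n a⟩

instance : Ring (PDO D) where
  __ := (inferInstance : AddCommGroup (PDO D))
  mul X Y := ⟨pdoMul D X.1 Y.1, bddAbove_support_pdoMul X Y⟩
  one := ⟨pdoSingle 0 1, bddAbove_support_pdoSingle 0 1⟩
  mul_assoc X Y Z := by
    obtain ⟨N, hX, hY⟩ := exists_support_subset_Iic X Y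
    obtain ⟨M, hZ⟩ := bddAbove_iff_subset_Iic.1 Z.2
    exact Subtype.ext (pdoMul_assoc D hX hY hZ)
  one_mul X := Subtype.ext ((pdoMul_pdoSingle_zero_left D 1 X.1).trans (one_smul K X.1))
  mul_one X := Subtype.ext <| funext fun r => by
    change pdoMul D X.1 (pdoSingle 0 1) r = X.1 r
    rw [pdoMul_pdoSingle_right D D.map_one_eq_zero, sub_zero, mul_one]
  left_distrib X Y Z := by
    obtain ⟨N, hX⟩ := bddAbove_iff_subset_Iic.1 X.2
    obtain ⟨M, hY, hZ⟩ := exists_support_subset_Iic Y Z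
    exact Subtype.ext (pdoMul_add_right D hX hY hZ)
  right_distrib X Y Z := by
    obtain ⟨N, hX, hY⟩ := exists_support_subset_Iic X Y
    obtain ⟨M, hZ⟩ := bddAbove_iff_subset_Iic.1 Z.2
    exact Subtype.ext (pdoMul_add_left D hX hY hZ)
  zero_mul X := Subtype.ext (pdoMul_zero_left D X.1)
  mul_zero X := Subtype.ext (pdoMul_zero_right D X.1)

theorem val_add (X Y : PDO D) : (X + Y).1 = X.1 + Y.1 := rfl

variable (D) in
def C : K →+* PDO D where
  toFun f := ⟨pdoSingle 0 f, bddAbove_support_pdoSingle 0 f⟩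
  map_one' := rfl
  map_mul' f g := Subtype.ext <| by
    change pdoSingle 0 (f * g) = pdoMul D (pdoSingle 0 f) (pdoSingle 0 g)
    rw [pdoMul_pdoSingle_zero_left, pdoSingle_eq_single, pdoSingle_eq_single, ← smul_eq_mul,
      Pi.single_smul']
  map_zero' := Subtype.ext <| by
    change pdoSingle 0 0 = 0
    rw [pdoSingle_eq_single, Pi.single_zero]
  map_add' f g := Subtype.ext <| by
    change pdoSingle 0 (f + g) = pdoSingle 0 f + pdoSingle 0 g
    simp only [pdoSingle_eq_single, Pi.single_add]

variable (D) in
def del : PDO D := ⟨pdoSingle 1 1, bddAbove_support_pdoSingle 1 1⟩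

variable (D) in
def delInv : PDO D := ⟨pdoSingle (-1) 1, bddAbove_support_pdoSingle (-1) 1⟩

local notation "∂" => del D
local notation "∂⁻¹" => delInv D

theorem val_C_mul (f : K) (X : PDO D) : (C D f * X).1 = f • X.1 :=
  pdoMul_pdoSingle_zero_left D f X.1

theorem del_mul_delInv : ∂ * ∂⁻¹ = 1 := Subtype.ext <| funext fun r => by
  change pdoMul D (pdoSingle 1 1) (pdoSingle (-1) 1) r = pdoSingle 0 1 r
  rw [pdoMul_pdoSingle_right D D.map_one_eq_zero, mul_one, sub_neg_eq_add]
  simp [pdoSingle]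

theorem delInv_mul_del : ∂⁻¹ * ∂ = 1 := Subtype.ext <| funext fun r => by
  change pdoMul D (pdoSingle (-1) 1) (pdoSingle 1 1) r = pdoSingle 0 1 r
  rw [pdoMul_pdoSingle_right D D.map_one_eq_zero, mul_one]
  simp [pdoSingle, sub_eq_iff_eq_add]

theorem del_mul_C (f : K) : ∂ * C D f = C D f * ∂ + C D (D f) :=
  Subtype.ext <| funext fun r => by
    change pdoMul D (pdoSingle 1 1) (pdoSingle 0 f) r
      = pdoMul D (pdoSingle 0 f) (pdoSingle 1 1) r + pdoSingle 0 (D f) r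
    rw [pdoMul_pdoSingle_one_left, pdoMul_pdoSingle_zero_left]
    rcases eq_or_ne r 1 with rfl | h1
    · simp [pdoSingle]
    rcases eq_or_ne r 0 with rfl | h0
    · simp [pdoSingle]
    · simp [pdoSingle, h0, h1, sub_eq_zero]

theorem isUnit_del : IsUnit ∂ := ⟨⟨∂, ∂⁻¹, del_mul_delInv, delInv_mul_del⟩, rfl⟩

theorem isUnit_C {f : K} (hf : f ≠ 0) : IsUnit (C D f) := hf.isUnit.map (C D)

section Algebra

variable (D)

theorem delInv_mul_del_mul (X : PDO D) : ∂⁻¹ * (∂ * X) = X := by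
  rw [← mul_assoc, delInv_mul_del, one_mul]

theorem C_mul_C_mul (f g : K) (X : PDO D) : C D f * (C D g * X) = C D (f * g) * X := by
  rw [← mul_assoc, map_mul]

theorem C_mul_del_mul (f : K) (X : PDO D) :
    C D f * (∂ * X) = ∂ * (C D f * X) - C D (D f) * X := by
  rw [← mul_assoc, ← mul_assoc, del_mul_C]
  noncomm_ring

theorem delInv_mul_C_mul_del_mul (f : K) (X : PDO D) :
    ∂⁻¹ * (C D f * (∂ * X)) = C D f * X - ∂⁻¹ * (C D (D f) * X) := by
  rw [C_mul_del_mul, mul_sub, delInv_mul_del_mul]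

theorem C_mul_del_mul_C_inv_mul {f : K} (hf : f ≠ 0) (X : PDO D) :
    C D f * (∂ * (C D f⁻¹ * X)) = ∂ * X - C D (D f / f) * X := by
  rw [C_mul_del_mul, C_mul_C_mul, mul_inv_cancel₀ hf, map_one, one_mul, C_mul_C_mul,
    div_eq_mul_inv]

theorem krichever_novikov_mul_eq {a u' c DL : K} (hu' : u' ≠ 0) (hDL : DL ≠ 0) (hc : c = D u' / u')
    (hDL_eq : DL = D (u'⁻¹ * D c)) :
    (C D u' * ∂⁻¹ * C D u' + C D a * (∂⁻¹ * C D u' * ∂⁻¹ * C D u' * ∂⁻¹)) *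
        (∂ * (C D u'⁻¹ * (∂ * (C D u'⁻¹ * (∂ * (C D DL⁻¹ * ∂))))))
      = (∂ * ∂ - C D (2 * c) * ∂ + C D (D c) + C D a) * C D DL⁻¹ * ∂ - C D u' := by
  set P := C D DL⁻¹ * ∂ with hP
  have hconj : ∀ X, C D u' * (∂ * (C D u'⁻¹ * X)) = ∂ * X - C D c * X := fun X => by
    rw [hc]
    exact C_mul_del_mul_C_inv_mul D hu' X
  have htail : C D u' * (∂⁻¹ * (C D (D c) * (C D u'⁻¹ * (∂ * P))))
      = C D (D c * DL⁻¹) * ∂ - C D u' := by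
    rw [C_mul_C_mul, C_mul_del_mul, mul_comm (D c), ← hDL_eq, hP, C_mul_C_mul D DL,
      mul_inv_cancel₀ hDL, map_one, one_mul, mul_sub, delInv_mul_del_mul, delInv_mul_del, mul_sub,
      mul_one, C_mul_C_mul, C_mul_C_mul, show u' * (u'⁻¹ * D c) * DL⁻¹ = D c * DL⁻¹ by field_simp]
  have hfirst : C D u' * ∂⁻¹ * C D u' * (∂ * (C D u'⁻¹ * (∂ * (C D u'⁻¹ * (∂ * P)))))
      = ∂ * (∂ * P) - C D c * (∂ * P) - C D c * (∂ * P) + (C D (D c * DL⁻¹) * ∂ - C D u') := by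
    set Y := ∂ * (C D u'⁻¹ * (∂ * P))
    calc C D u' * ∂⁻¹ * C D u' * (∂ * (C D u'⁻¹ * Y))
        = C D u' * (∂⁻¹ * (C D u' * (∂ * (C D u'⁻¹ * Y)))) := by simp only [mul_assoc]
      _ = C D u' * Y - C D u' * (∂⁻¹ * (C D c * Y)) := by
          rw [hconj, mul_sub, delInv_mul_del_mul, mul_sub]
      _ = ∂ * (∂ * P) - C D c * (∂ * P)
            - (C D c * (∂ * P) - C D u' * (∂⁻¹ * (C D (D c) * (C D u'⁻¹ * (∂ * P))))) := by
          rw [hconj, delInv_mul_C_mul_del_mul, mul_sub, C_mul_C_mul, C_mul_C_mul,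
            mul_comm u' c, mul_inv_cancel_right₀ hu']
      _ = _ := by
          rw [htail]
          abel
  have hsecond : ∂⁻¹ * C D u' * ∂⁻¹ * C D u' * ∂⁻¹ * (∂ * (C D u'⁻¹ * (∂ * (C D u'⁻¹ * (∂ * P)))))
      = P := by
    simp only [mul_assoc, delInv_mul_del_mul, C_mul_C_mul, mul_inv_cancel₀ hu', map_one, one_mul]
  rw [add_mul, hfirst, mul_assoc (C D a), hsecond, hP]
  simp only [map_mul, map_ofNat]
  noncomm_ring

end Algebra

end PDO

theorem stmt18_general (d : K → K)
    (hd_add : ∀ a b : K, d (a + b) = d a + d b)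
    (hd_mul : ∀ a b : K, d (a * b) = d a * b + a * d b)
    (a u' : K) (hu' : u' ≠ 0)
    (hDL : d (u'⁻¹ * d (d u' / u')) ≠ 0) :
    let u'' : K := d u'
    let DL : K := d (u'⁻¹ * d (u'' / u'))
    let Dop : ℤ → K := pdoSingle 1 1
    let Dinv : ℤ → K := pdoSingle (-1) 1
    let M : K → ℤ → K := pdoSingle 0
    let H : ℤ → K :=
      pdoMul d (pdoMul d (M u') Dinv) (M u')
        + a • pdoMul d (pdoMul d (pdoMul d (pdoMul d Dinv (M u')) Dinv) (M u')) Dinv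
    let A : ℤ → K :=
      pdoMul d (pdoMul d
        (pdoMul d Dop Dop - pdoMul d (M (2 * (u'' / u'))) Dop + M (d (u'' / u')) + M a)
        (M DL⁻¹)) Dop - M u'
    let B : ℤ → K :=
      pdoMul d Dop (pdoMul d (M u'⁻¹) (pdoMul d Dop (pdoMul d (M u'⁻¹)
        (pdoMul d Dop (pdoMul d (M DL⁻¹) Dop)))))
    ∃ Binv : ℤ → K,
      pdoMul d B Binv = pdoSingle 0 1 ∧
      pdoMul d Binv B = pdoSingle 0 1 ∧
      H = pdoMul d A Binv := by
  intro u'' DL Dop Dinv M H A B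
  let D : Derivation ℤ K K := Derivation.mk' (AddMonoidHom.mk' d hd_add).toIntLinearMap
    fun x y => by
      change d (x * y) = x * d y + y * d x
      rw [hd_mul]
      ring
  have hB : IsUnit (PDO.del D * (PDO.C D u'⁻¹ * (PDO.del D * (PDO.C D u'⁻¹ *
      (PDO.del D * (PDO.C D DL⁻¹ * PDO.del D)))))) := by
    have hdel := PDO.isUnit_del (D := D)
    have hu := PDO.isUnit_C (D := D) (inv_ne_zero hu')
    have hDL := PDO.isUnit_C (D := D) (inv_ne_zero hDL)
    exact hdel.mul (hu.mul (hdel.mul (hu.mul (hdel.mul (hDL.mul hdel)))))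
  have hH := (Units.eq_mul_inv_iff_mul_eq hB.unit).2
    (PDO.krichever_novikov_mul_eq D (a := a) hu' hDL rfl rfl)
  refine ⟨(hB.unit⁻¹ : (PDO D)ˣ).val.1, congrArg Subtype.val hB.mul_val_inv,
    congrArg Subtype.val hB.val_inv_mul, ?_⟩
  have hval := congrArg Subtype.val hH
  rw [PDO.val_add, PDO.val_C_mul] at hval
  exact hval

/-- Minimal fractional decomposition of the Krichever–Novikov type non-local structure:
over the (localized) algebra of differential functions in `u`, the rational
pseudodifferential operator `H = u'∂⁻¹∘u' + a·∂⁻¹∘u'∂⁻¹∘u'∂⁻¹` equals `A ∘ B⁻¹`, where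
`A = (∂² − 2(u''/u')∂ + (u''/u')' + a) ∘ (1/D(u')) ∘ ∂ − u'`,
`B = ∂∘(1/u')∘∂∘(1/u')∘∂∘(1/D(u'))∘∂`, and `D(u') = ((1/u')(u''/u')')'`. -/
theorem stmt18 (d : K → K)
    (hd_add : ∀ a b : K, d (a + b) = d a + d b)
    (hd_mul : ∀ a b : K, d (a * b) = d a * b + a * d b)
    (a u' : K) (ha : d a = 0) (hu' : u' ≠ 0)
    (hDL : d (u'⁻¹ * d (d u' / u')) ≠ 0) :
    let u'' : K := d u'
    let DL : K := d (u'⁻¹ * d (u'' / u'))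
    let Dop : ℤ → K := pdoSingle 1 1
    let Dinv : ℤ → K := pdoSingle (-1) 1
    let M : K → ℤ → K := pdoSingle 0
    let H : ℤ → K :=
      pdoMul d (pdoMul d (M u') Dinv) (M u')
        + a • pdoMul d (pdoMul d (pdoMul d (pdoMul d Dinv (M u')) Dinv) (M u')) Dinv
    let A : ℤ → K :=
      pdoMul d (pdoMul d
        (pdoMul d Dop Dop - pdoMul d (M (2 * (u'' / u'))) Dop + M (d (u'' / u')) + M a)
        (M DL⁻¹)) Dop - M u'
    let B : ℤ → K :=
      pdoMul d Dop (pdoMul d (M u'⁻¹) (pdoMul d Dop (pdoMul d (M u'⁻¹)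
        (pdoMul d Dop (pdoMul d (M DL⁻¹) Dop)))))
    ∃ Binv : ℤ → K,
      pdoMul d B Binv = pdoSingle 0 1 ∧
      pdoMul d Binv B = pdoSingle 0 1 ∧
      H = pdoMul d A Binv :=
  stmt18_general d hd_add hd_mul a u' hu' hDL

end
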